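/- Let t ≥ 3, k ≥ 3, and l ≥ t + 1, and let n be a positive integer. Suppose φ is a coloring of the edges of the complete graph on vertex set {1, …, n} with two colors, 'first' and 'second', containing no monochromatic K_k in color 'first' and no monochromatic K_{l − t + 1} in color 'second'. Define a coloring χ with colors 1, 2, 3 of the edges of the complete graph on vertex set {1, …, t + 1} × {1, …, n} as follows. For block indices i > j (with i, j ∈ {1, …, t + 1}), call the block pair (i, j) type B if (i, j) = (2, 1) or (i ≥ 4 and 3 ≤ j ≤ i − 1), and type C if i ≥ 3 and j ∈ {1, 2}. Set: (a) χ((i, v), (i, w)) = 2 if φ(v, w) = 'first' and 3 if φ(v, w) = 'second'; (b) for i ≠ j with block pair of type B: χ((i, v), (j, w)) = 3 if v = w, and otherwise 2 if φ(v, w) = 'first' and 1 if φ(v, w) = 'second'; (c) for i ≠ j with block pair of type C: χ((i, v), (j, w)) = 1 if v = w, and otherwise 2 if φ(v, w) = 'first' and 3 if φ(v, w) = 'second'. Then χ contains no monochromatic K_t of color 1, no monochromatic K_k of color 2, and no monochromatic K_l of color 3. -/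

import Mathlib

/-- The two colors of the base coloring `φ`. -/
inductive TwoColor
  | first
  | second
deriving DecidableEq

/-- A coloring `χ` of the edges of the complete graph on `V` contains a
monochromatic `K_m` of color `c`: there are `m` vertices all of whose
pairwise edges receive color `c`. -/
def HasMonoClique {V C : Type*} (χ : V → V → C) (c : C) (m : ℕ) : Prop :=
  ∃ s : Finset V, s.card = m ∧ ∀ u ∈ s, ∀ v ∈ s, u ≠ v → χ u v = c

/-- Block pair `(i, j)` (with 1-based block indices, `i > j`) is of type `B`:
`(i, j) = (2, 1)`, or `i ≥ 4` and `3 ≤ j ≤ i - 1`. -/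
def BlockTypeB (i j : ℕ) : Prop :=
  (i = 2 ∧ j = 1) ∨ (4 ≤ i ∧ 3 ≤ j ∧ j ≤ i - 1)

instance (i j : ℕ) : Decidable (BlockTypeB i j) := by
  unfold BlockTypeB; infer_instance

/-- The 3-coloring `χ` of the edges of the complete graph on
`{1, …, t+1} × {1, …, n}` built from a two-coloring `φ` of the edges of `K_n`.
Vertices are pairs `(i, v)` with block index `i` (represented 0-based, so the
1-based block index is `i + 1`).  Within a block the colors `first`/`second` of
`φ` become `2`/`3`; between two distinct blocks whose (ordered) 1-based pair is
of type `B`, diagonal edges (`v = w`) get color `3` and otherwise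
`first`/`second` become `2`/`1`; between blocks of type `C` (all remaining
pairs, i.e. `i ≥ 3` and `j ∈ {1, 2}`), diagonal edges get color `1` and
otherwise `first`/`second` become `2`/`3`. -/
def chi (t n : ℕ) (φ : Fin n → Fin n → TwoColor) :
    Fin (t + 1) × Fin n → Fin (t + 1) × Fin n → ℕ := fun p q =>
  if p.1 = q.1 then
    if φ p.2 q.2 = TwoColor.first then 2 else 3
  else
    if BlockTypeB (max (p.1.1 + 1) (q.1.1 + 1)) (min (p.1.1 + 1) (q.1.1 + 1)) then
      if p.2 = q.2 then 3
      else if φ p.2 q.2 = TwoColor.first then 2 else 1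
    else
      if p.2 = q.2 then 1
      else if φ p.2 q.2 = TwoColor.first then 2 else 3

/-!
Call blocks `1, 2` low and `3, …, t + 1` high: a pair of distinct blocks is of type `B` exactly
when both lie on the same side. Away from the diagonal `v = w`, colors `2` and `3` only occur where
`φ v w` is `first`, resp. `second`, so projecting to the second coordinate sends a clique of color
`2` injectively onto a `first`-clique of `φ`, and a clique of color `3` onto a `second`-clique.
Two vertices of a color-`3` clique in distinct blocks share their coordinate if the blocks are on
the same side and not otherwise, so on each side the clique lies in a single block or on a single
coordinate, and the projection loses at most `1 + (t - 2)` vertices. A clique of color `1` meets each block at most once, with equal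
coordinates across the sides and distinct ones within a side; three such vertices cannot straddle
both sides, so the clique has at most `max 2 (t - 1) < t` vertices.
-/

open Finset

def IsMonoClique {V C : Type*} (χ : V → V → C) (c : C) (s : Finset V) : Prop :=
  ∀ u ∈ s, ∀ v ∈ s, u ≠ v → χ u v = c

namespace IsMonoClique

variable {V W C D : Type*} {χ : V → V → C} {c : C} {s : Finset V}

lemma subset {s' : Finset V} (hs : IsMonoClique χ c s) (h : s' ⊆ s) : IsMonoClique χ c s' :=
  fun u hu v hv => hs u (h hu) v (h hv)

lemma hasMonoClique {m : ℕ} (hs : IsMonoClique χ c s) (hm : m ≤ s.card) :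
    HasMonoClique χ c m := by
  obtain ⟨s', hs', rfl⟩ := exists_subset_card_eq hm
  exact ⟨s', rfl, hs.subset hs'⟩

lemma injOn (hs : IsMonoClique χ c s) {f : V → W}
    (hf : ∀ u v, u ≠ v → χ u v = c → f u ≠ f v) : Set.InjOn f s :=
  fun u hu v hv => not_imp_not.mp fun huv => hf u v huv (hs u hu v hv huv)

lemma image [DecidableEq W] (hs : IsMonoClique χ c s) {ψ : W → W → D} {d : D} (f : V → W)
    (hf : ∀ u v, f u ≠ f v → χ u v = c → ψ (f u) (f v) = d) :
    IsMonoClique ψ d (s.image f) := by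
  simp only [IsMonoClique, mem_image]
  rintro _ ⟨u, hu, rfl⟩ _ ⟨v, hv, rfl⟩ huv
  exact hf u v huv (hs u hu v hv (ne_of_apply_ne f huv))

end IsMonoClique

lemma forall_iff_of_two_lt_card {V β : Type*} [DecidableEq V] (P : V → Prop) (g : V → β)
    {s : Finset V} (hs : 2 < s.card)
    (hsame : ∀ u ∈ s, ∀ v ∈ s, u ≠ v → (P u ↔ P v) → g u ≠ g v)
    (hcross : ∀ u ∈ s, ∀ v ∈ s, ¬(P u ↔ P v) → g u = g v) :
    ∀ u ∈ s, ∀ v ∈ s, P u ↔ P v := by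
  by_contra hall
  obtain ⟨a, ha, b, hb, hab⟩ : ∃ a ∈ s, ∃ b ∈ s, ¬(P a ↔ P b) := by
    simpa only [not_forall, exists_prop] using hall
  obtain ⟨c, hc, hcab⟩ := exists_mem_notMem_of_card_lt_card
    (card_le_two.trans_lt hs : ({a, b} : Finset V).card < s.card)
  simp only [mem_insert, mem_singleton, not_or] at hcab
  by_cases hca : P c ↔ P a
  · exact hsame c hc a ha hcab.1 hca
      ((hcross c hc b hb (by tauto)).trans (hcross a ha b hb hab).symm)
  · exact hsame c hc b hb hcab.2 (by tauto)
      ((hcross c hc a ha hca).trans (hcross a ha b hb hab))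

lemma card_le_card_image_snd_add {α β : Type*} [DecidableEq α] [DecidableEq β]
    (u : Finset (α × β)) (h : ∀ p ∈ u, ∀ q ∈ u, p.1 ≠ q.1 → p.2 = q.2) :
    u.card ≤ (u.image Prod.snd).card + ((u.image Prod.fst).card - 1) := by
  rcases le_or_gt (u.image Prod.fst).card 1 with hfst | hfst
  · have hinj : Set.InjOn Prod.snd u := fun p hp q hq hsnd =>
      Prod.ext (card_le_one.mp hfst _ (mem_image_of_mem _ hp) _ (mem_image_of_mem _ hq)) hsnd
    rw [card_image_of_injOn hinj]
    omega
  · obtain ⟨a, ha, b, hb, hpq⟩ := one_lt_card.mp hfst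
    obtain ⟨p, hp, rfl⟩ := mem_image.mp ha
    obtain ⟨q, hq, rfl⟩ := mem_image.mp hb
    have hconst : ∀ r ∈ u, r.2 = p.2 := fun r hr => by
      by_cases hrp : r.1 = p.1
      · exact (h r hr q hq (hrp ▸ hpq)).trans (h p hp q hq hpq).symm
      · exact h r hr p hp hrp
    have hinj : Set.InjOn Prod.fst u := fun r hr r' hr' hfst =>
      Prod.ext hfst ((hconst r hr).trans (hconst r' hr').symm)
    have hsnd : 0 < (u.image Prod.snd).card := card_pos.mpr ⟨p.2, mem_image_of_mem _ hp⟩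
    rw [card_image_of_injOn hinj] at hfst ⊢
    omega

lemma card_le_of_forall_val_lt {m c : ℕ} (A : Finset (Fin m)) (h : ∀ i ∈ A, (i : ℕ) < c) :
    A.card ≤ c :=
  (card_le_card_of_injOn Fin.val (fun i hi => mem_range.mpr (h i hi))
    Fin.val_injective.injOn).trans_eq (card_range c)

lemma card_le_sub_of_forall_le_val {m c : ℕ} (A : Finset (Fin m))
    (h : ∀ i ∈ A, c ≤ (i : ℕ)) : A.card ≤ m - c :=
  (card_le_card_of_injOn Fin.val (fun i hi => mem_Ico.mpr ⟨h i hi, i.2⟩)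
    Fin.val_injective.injOn).trans_eq (Nat.card_Ico c m)

lemma blockTypeB_max_min_iff {a b : ℕ} (h : a ≠ b) :
    BlockTypeB (max (a + 1) (b + 1)) (min (a + 1) (b + 1)) ↔ (a < 2 ↔ b < 2) := by
  unfold BlockTypeB
  omega

namespace chi

variable {t n : ℕ} {φ : Fin n → Fin n → TwoColor} {p q : Fin (t + 1) × Fin n}
  {s : Finset (Fin (t + 1) × Fin n)}

lemma of_fst_eq (h : p.1 = q.1) :
    chi t n φ p q = if φ p.2 q.2 = .first then 2 else 3 := if_pos h

lemma of_sameSide (h : p.1 ≠ q.1) (hside : p.1.1 < 2 ↔ q.1.1 < 2) :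
    chi t n φ p q = if p.2 = q.2 then 3 else if φ p.2 q.2 = .first then 2 else 1 := by
  rw [chi, if_neg h, if_pos ((blockTypeB_max_min_iff (Fin.val_ne_of_ne h)).mpr hside)]

lemma of_not_sameSide (hside : ¬(p.1.1 < 2 ↔ q.1.1 < 2)) :
    chi t n φ p q = if p.2 = q.2 then 1 else if φ p.2 q.2 = .first then 2 else 3 := by
  have h : p.1 ≠ q.1 := fun h => hside (h ▸ Iff.rfl)
  rw [chi, if_neg h, if_neg (mt (blockTypeB_max_min_iff (Fin.val_ne_of_ne h)).mp hside)]

lemma fst_ne_of_eq_one (h : chi t n φ p q = 1) : p.1 ≠ q.1 := by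
  intro hfst
  rw [of_fst_eq hfst] at h
  split_ifs at h <;> omega

lemma snd_ne_of_eq_one (h : chi t n φ p q = 1) (hside : p.1.1 < 2 ↔ q.1.1 < 2) :
    p.2 ≠ q.2 := by
  intro hsnd
  rw [of_sameSide (fst_ne_of_eq_one h) hside, if_pos hsnd] at h
  cases h

lemma snd_eq_of_eq_one (h : chi t n φ p q = 1) (hside : ¬(p.1.1 < 2 ↔ q.1.1 < 2)) :
    p.2 = q.2 := by
  rw [of_not_sameSide hside] at h
  split_ifs at h with hsnd <;> first | exact hsnd | omega

lemma snd_ne_of_eq_two (hpq : p ≠ q) (h : chi t n φ p q = 2) : p.2 ≠ q.2 := by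
  intro hsnd
  by_cases hfst : p.1 = q.1
  · exact hpq (Prod.ext hfst hsnd)
  by_cases hside : p.1.1 < 2 ↔ q.1.1 < 2
  · rw [of_sameSide hfst hside, if_pos hsnd] at h; cases h
  · rw [of_not_sameSide hside, if_pos hsnd] at h; cases h

lemma first_of_eq_two (h : chi t n φ p q = 2) : φ p.2 q.2 = .first := by
  unfold chi at h
  split_ifs at h <;> first | assumption | omega

lemma second_of_eq_three (h : chi t n φ p q = 3) (hsnd : p.2 ≠ q.2) : φ p.2 q.2 = .second := by
  have hne : φ p.2 q.2 ≠ .first := by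
    unfold chi at h
    split_ifs at h <;> first | assumption | omega
  cases hφ : φ p.2 q.2
  exacts [absurd hφ hne, rfl]

lemma snd_eq_of_eq_three (h : chi t n φ p q = 3) (hfst : p.1 ≠ q.1)
    (hside : p.1.1 < 2 ↔ q.1.1 < 2) : p.2 = q.2 := by
  rw [of_sameSide hfst hside] at h
  split_ifs at h with hsnd <;> first | exact hsnd | omega

lemma snd_ne_of_eq_three (h : chi t n φ p q = 3) (hside : ¬(p.1.1 < 2 ↔ q.1.1 < 2)) :
    p.2 ≠ q.2 := by
  intro hsnd
  rw [of_not_sameSide hside, if_pos hsnd] at h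
  cases h

theorem not_hasMonoClique_one (ht : 3 ≤ t) : ¬ HasMonoClique (chi t n φ) 1 t := by
  rintro ⟨s, hcard, hs : IsMonoClique _ _ s⟩
  have hinj : Set.InjOn Prod.fst (s : Set (Fin (t + 1) × Fin n)) :=
    hs.injOn fun _ _ _ h => fst_ne_of_eq_one h
  have hside := forall_iff_of_two_lt_card (fun p : Fin (t + 1) × Fin n => p.1.1 < 2) Prod.snd
    (by omega) (fun p hp q hq hpq => snd_ne_of_eq_one (hs p hp q hq hpq))
    (fun p hp q hq hpq => snd_eq_of_eq_one (hs p hp q hq fun h => hpq (h ▸ Iff.rfl)) hpq)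
  obtain ⟨a, ha⟩ : s.Nonempty := card_pos.mp (by omega)
  have hfst : (s.image Prod.fst).card < t := by
    by_cases hlow : a.1.1 < 2
    · have := card_le_of_forall_val_lt (s.image Prod.fst) (c := 2)
        (forall_mem_image.mpr fun p hp => (hside p hp a ha).mpr hlow)
      omega
    · have := card_le_sub_of_forall_le_val (s.image Prod.fst) (c := 2)
        (forall_mem_image.mpr fun p hp => not_lt.mp (mt (hside p hp a ha).mp hlow))
      omega
  rw [card_image_of_injOn hinj] at hfst
  omega

theorem hasMonoClique_first_of_two {k : ℕ} (h : HasMonoClique (chi t n φ) 2 k) :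
    HasMonoClique φ .first k := by
  obtain ⟨s, rfl, hs : IsMonoClique _ _ s⟩ := h
  refine ⟨s.image Prod.snd, card_image_of_injOn (hs.injOn fun _ _ => snd_ne_of_eq_two), ?_⟩
  exact hs.image Prod.snd fun _ _ _ => first_of_eq_two

lemma card_le_of_isMonoClique_three_of_sameSide (hs : IsMonoClique (chi t n φ) 3 s)
    (hside : ∀ p ∈ s, ∀ q ∈ s, p.1.1 < 2 ↔ q.1.1 < 2) :
    s.card ≤ (s.image Prod.snd).card + ((s.image Prod.fst).card - 1) :=
  card_le_card_image_snd_add s fun p hp q hq hfst =>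
    snd_eq_of_eq_three (hs p hp q hq (ne_of_apply_ne Prod.fst hfst)) hfst (hside p hp q hq)

lemma card_le_of_isMonoClique_three (hs : IsMonoClique (chi t n φ) 3 s) :
    s.card ≤ (s.image Prod.snd).card + 1 + (t - 2) := by
  set low : Fin (t + 1) × Fin n → Prop := fun p => p.1.1 < 2
  have hdisj : Disjoint ((s.filter low).image Prod.snd) ((s.filter (¬low ·)).image Prod.snd) := by
    simp only [disjoint_left, mem_image, mem_filter]
    rintro _ ⟨p, ⟨hp, hpL⟩, rfl⟩ ⟨q, ⟨hq, hqH⟩, hpq⟩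
    have hside : ¬(low p ↔ low q) := fun h => hqH (h.mp hpL)
    exact snd_ne_of_eq_three (hs p hp q hq fun h => hside (h ▸ Iff.rfl)) hside hpq.symm
  have hsnd : (s.image Prod.snd).card =
      ((s.filter low).image Prod.snd).card + ((s.filter (¬low ·)).image Prod.snd).card := by
    rw [← card_union_of_disjoint hdisj, ← image_union, filter_union_filter_not_eq]
  have hL := card_le_of_isMonoClique_three_of_sameSide (hs.subset (filter_subset low s))
    fun p hp q hq => iff_of_true (mem_filter.mp hp).2 (mem_filter.mp hq).2
  have hH := card_le_of_isMonoClique_three_of_sameSide (hs.subset (filter_subset (¬low ·) s))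
    fun p hp q hq => iff_of_false (mem_filter.mp hp).2 (mem_filter.mp hq).2
  have hfL := card_le_of_forall_val_lt ((s.filter low).image Prod.fst) (c := 2)
    (forall_mem_image.mpr fun p hp => (mem_filter.mp hp).2)
  have hfH := card_le_sub_of_forall_le_val ((s.filter (¬low ·)).image Prod.fst) (c := 2)
    (forall_mem_image.mpr fun p hp => not_lt.mp (mem_filter.mp hp).2)
  have := card_filter_add_card_filter_not (s := s) low
  omega

theorem hasMonoClique_second_of_three {l : ℕ} (ht : 2 ≤ t) (hl : t + 1 ≤ l)
    (h : HasMonoClique (chi t n φ) 3 l) : HasMonoClique φ .second (l - t + 1) := by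
  obtain ⟨s, rfl, hs : IsMonoClique _ _ s⟩ := h
  have hW := hs.image Prod.snd fun _ _ hsnd h => second_of_eq_three h hsnd
  exact hW.hasMonoClique (by have := card_le_of_isMonoClique_three hs; omega)

end chi

theorem chi_no_mono_cliques_general (t k l n : ℕ) (ht : 3 ≤ t) (hl : t + 1 ≤ l)
    (φ : Fin n → Fin n → TwoColor)
    (hφ1 : ¬ HasMonoClique φ TwoColor.first k)
    (hφ2 : ¬ HasMonoClique φ TwoColor.second (l - t + 1)) :
    ¬ HasMonoClique (chi t n φ) 1 t ∧
    ¬ HasMonoClique (chi t n φ) 2 k ∧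
    ¬ HasMonoClique (chi t n φ) 3 l :=
  ⟨chi.not_hasMonoClique_one ht, mt chi.hasMonoClique_first_of_two hφ1,
    mt (chi.hasMonoClique_second_of_three (by omega) hl) hφ2⟩

/-- The coloring `chi t n φ` contains no monochromatic `K_t` of color `1`,
no monochromatic `K_k` of color `2`, and no monochromatic `K_l` of color `3`. -/
theorem chi_no_mono_cliques (t k l n : ℕ) (ht : 3 ≤ t) (hk : 3 ≤ k) (hl : t + 1 ≤ l) (hn : 0 < n)
    (φ : Fin n → Fin n → TwoColor)
    (hφsymm : ∀ v w, φ v w = φ w v)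
    (hφ1 : ¬ HasMonoClique φ TwoColor.first k)
    (hφ2 : ¬ HasMonoClique φ TwoColor.second (l - t + 1)) :
    ¬ HasMonoClique (chi t n φ) 1 t ∧
    ¬ HasMonoClique (chi t n φ) 2 k ∧
    ¬ HasMonoClique (chi t n φ) 3 l :=
  chi_no_mono_cliques_general t k l n ht hl φ hφ1 hφ2
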